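/- If X is a space with countable extent of cardinality less than 𝔡 satisfying selSS*_cd(O,Γ), then X is selectively strongly star-Menger. -/

import Mathlib

open Set Filter

variable {X : Type u}

def star {X : Type u} (A : Set X) (U : Set (Set X)) : Set X :=
  ⋃₀ {u ∈ U | (u ∩ A).Nonempty}

def IsOpenCover {X : Type u} [TopologicalSpace X] (U : Set (Set X)) : Prop :=
  (∀ u ∈ U, IsOpen u) ∧ ⋃₀ U = univ

noncomputable def domNum : Cardinal :=
  sInf {c | ∃ D : Set (ℕ → ℕ), Cardinal.mk D = c ∧
    ∀ f : ℕ → ℕ, ∃ g ∈ D, ∀ᶠ n in atTop, f n ≤ g n}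

noncomputable def boundNum : Cardinal :=
  sInf {c | ∃ B : Set (ℕ → ℕ), Cardinal.mk B = c ∧
    ¬ ∃ g : ℕ → ℕ, ∀ f ∈ B, ∀ᶠ n in atTop, f n ≤ g n}

noncomputable def covMeager : Cardinal :=
  sInf {c | ∃ F : Set (ℕ → ℕ), Cardinal.mk F = c ∧
    ¬ ∃ g : ℕ → ℕ, ∀ f ∈ F, {n | g n = f n}.Infinite}

def StronglyStarLindelof (X : Type u) [TopologicalSpace X] : Prop :=
  ∀ U : Set (Set X), IsOpenCover U →
    ∃ C : Set X, C.Countable ∧ star C U = univ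

def AbsStronglyStarLindelof (X : Type u) [TopologicalSpace X] : Prop :=
  ∀ U : Set (Set X), IsOpenCover U → ∀ D : Set X, Dense D →
    ∃ C : Set X, C ⊆ D ∧ C.Countable ∧ star C U = univ

def StronglyStarMenger (X : Type u) [TopologicalSpace X] : Prop :=
  ∀ U : ℕ → Set (Set X), (∀ n, IsOpenCover (U n)) →
    ∃ F : ℕ → Finset X, ⋃ n, star (↑(F n)) (U n) = univ

def AbsStronglyStarMenger (X : Type u) [TopologicalSpace X] : Prop :=
  ∀ U : ℕ → Set (Set X), (∀ n, IsOpenCover (U n)) → ∀ D : Set X, Dense D →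
    ∃ F : ℕ → Finset X, (∀ n, ↑(F n) ⊆ D) ∧ ⋃ n, star (↑(F n)) (U n) = univ

def SelStronglyStarMenger (X : Type u) [TopologicalSpace X] : Prop :=
  ∀ U : ℕ → Set (Set X), (∀ n, IsOpenCover (U n)) →
    ∀ D : ℕ → Set X, (∀ n, Dense (D n)) →
      ∃ F : ℕ → Finset X, (∀ n, ↑(F n) ⊆ D n) ∧ ⋃ n, star (↑(F n)) (U n) = univ

def StronglyStarHurewicz (X : Type u) [TopologicalSpace X] : Prop :=
  ∀ U : ℕ → Set (Set X), (∀ n, IsOpenCover (U n)) →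
    ∃ F : ℕ → Finset X, ∀ x : X, ∀ᶠ n in atTop, x ∈ star (↑(F n)) (U n)

def SelStronglyStarHurewicz (X : Type u) [TopologicalSpace X] : Prop :=
  ∀ U : ℕ → Set (Set X), (∀ n, IsOpenCover (U n)) →
    ∀ D : ℕ → Set X, (∀ n, Dense (D n)) →
      ∃ F : ℕ → Finset X, (∀ n, ↑(F n) ⊆ D n) ∧
        ∀ x : X, ∀ᶠ n in atTop, x ∈ star (↑(F n)) (U n)

def StronglyStarRothberger (X : Type u) [TopologicalSpace X] : Prop :=
  ∀ U : ℕ → Set (Set X), (∀ n, IsOpenCover (U n)) →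
    ∃ x : ℕ → X, ⋃ n, star {x n} (U n) = univ

def SelStronglyStarRothberger (X : Type u) [TopologicalSpace X] : Prop :=
  ∀ U : ℕ → Set (Set X), (∀ n, IsOpenCover (U n)) →
    ∀ D : ℕ → Set X, (∀ n, Dense (D n)) →
      ∃ d : ℕ → X, (∀ n, d n ∈ D n) ∧ ⋃ n, star {d n} (U n) = univ

def DiscreteIn {X : Type u} [TopologicalSpace X] (C : Set X) : Prop :=
  ∀ x ∈ C, ∃ O : Set X, IsOpen O ∧ O ∩ C = {x}

def CountableExtent (X : Type u) [TopologicalSpace X] : Prop :=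
  ∀ C : Set X, IsClosed C → DiscreteIn C → C.Countable

def SelSScdOGamma (X : Type u) [TopologicalSpace X] : Prop :=
  ∀ U : ℕ → Set (Set X), (∀ n, IsOpenCover (U n)) →
    ∀ D : ℕ → Set X, (∀ n, Dense (D n)) →
      ∃ C : ℕ → Set X, (∀ n, C n ⊆ D n ∧ IsClosed (C n) ∧ DiscreteIn (C n)) ∧
        ∀ x : X, ∀ᶠ n in atTop, x ∈ star (C n) (U n)

def SelSScdOO (X : Type u) [TopologicalSpace X] : Prop :=
  ∀ U : ℕ → Set (Set X), (∀ n, IsOpenCover (U n)) →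
    ∀ D : ℕ → Set X, (∀ n, Dense (D n)) →
      ∃ C : ℕ → Set X, (∀ n, C n ⊆ D n ∧ IsClosed (C n) ∧ DiscreteIn (C n)) ∧
        ⋃ n, star (C n) (U n) = univ

def StarSigmaK (X : Type u) [TopologicalSpace X] (K : Set (Set X)) : Prop :=
  ∀ U : Set (Set X), IsOpenCover U →
    ∃ E : ℕ → Set X, (∀ m, E m ∈ K) ∧ star (⋃ m, E m) U = univ

def AbsStarSigmaK (X : Type u) [TopologicalSpace X] (K : Set (Set X)) : Prop :=
  ∀ D : Set X, Dense D → ∀ U : Set (Set X), IsOpenCover U →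
    ∃ E : ℕ → Set X, (∀ m, E m ∈ K ∧ E m ⊆ D) ∧ star (⋃ m, E m) U = univ

def AbsNbhdStarMenger (X : Type u) [TopologicalSpace X] : Prop :=
  ∀ U : ℕ → Set (Set X), (∀ n, IsOpenCover (U n)) → ∀ D : Set X, Dense D →
    ∃ F : ℕ → Finset X, (∀ n, ↑(F n) ⊆ D) ∧
      ∀ O : ℕ → Set X, (∀ n, IsOpen (O n) ∧ ↑(F n) ⊆ O n) →
        ⋃ n, star (O n) (U n) = univ

def AbsNbhdStarHurewicz (X : Type u) [TopologicalSpace X] : Prop :=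
  ∀ U : ℕ → Set (Set X), (∀ n, IsOpenCover (U n)) → ∀ D : Set X, Dense D →
    ∃ F : ℕ → Finset X, (∀ n, ↑(F n) ⊆ D) ∧
      ∀ O : ℕ → Set X, (∀ n, IsOpen (O n) ∧ ↑(F n) ⊆ O n) →
        ∀ x : X, ∀ᶠ n in atTop, x ∈ star (O n) (U n)


/-!
Each `C n` is countable by countable extent, so it is enumerated by a sequence `e n` in `D n`.
For a point `x` let `f x n` be an index `k` with `x ∈ St({e n k}, U n)`. As `|X| < 𝔡`, the
functions `f x` are not dominating: some `g` exceeds each `f x` infinitely often, and since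
`x ∈ St(C n, U n)` for all large `n`, the first `g n` terms of `e n` form the finite sets `F n`.
-/

theorem mem_star_iff {A : Set X} {U : Set (Set X)} {x : X} :
    x ∈ star A U ↔ ∃ u ∈ U, (u ∩ A).Nonempty ∧ x ∈ u := by
  simp only [_root_.star, mem_sUnion, mem_sep_iff, and_assoc]

theorem star_mono {A B : Set X} (hAB : A ⊆ B) (U : Set (Set X)) : star A U ⊆ star B U :=
  sUnion_mono (fun _ ⟨hu, hA⟩ => ⟨hu, hA.mono (inter_subset_inter_right _ hAB)⟩)

theorem exists_mem_star_singleton_of_mem_star {A : Set X} {U : Set (Set X)} {x : X}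
    (hx : x ∈ star A U) : ∃ a ∈ A, x ∈ star {a} U := by
  obtain ⟨u, hu, ⟨a, hau, haA⟩, hxu⟩ := mem_star_iff.mp hx
  exact ⟨a, haA, mem_star_iff.mpr ⟨u, hu, ⟨a, hau, rfl⟩, hxu⟩⟩

theorem exists_frequently_lt_of_mk_lt_domNum {ι : Type u} (f : ι → ℕ → ℕ)
    (hcard : Cardinal.mk ι < Cardinal.lift.{u} domNum) :
    ∃ g : ℕ → ℕ, ∀ i, ∃ᶠ n in atTop, f i n < g n := by
  by_contra! hdom
  have hle : domNum ≤ Cardinal.mk (range f) :=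
    csInf_le' ⟨range f, rfl, fun g => by
      obtain ⟨i, hi⟩ := hdom g
      exact ⟨f i, mem_range_self i, hi⟩⟩
  have hrange := Cardinal.mk_range_le_lift (f := f)
  rw [Cardinal.lift_uzero] at hrange
  exact hcard.not_ge ((Cardinal.lift_le.mpr hle).trans hrange)

theorem Set.Countable.exists_seq_between {C D : Set X} (hC : C.Countable) (hCD : C ⊆ D)
    (hD : D.Nonempty) : ∃ e : ℕ → X, C ⊆ range e ∧ range e ⊆ D := by
  obtain ⟨d, hd⟩ := hD
  obtain ⟨e, he⟩ := (hC.insert d).exists_eq_range (insert_nonempty d C)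
  exact ⟨e, he ▸ subset_insert d C, he ▸ insert_subset hd hCD⟩

theorem exists_bound_iUnion_star_image_eq_univ [DecidableEq X] {U : ℕ → Set (Set X)}
    (e : ℕ → ℕ → X) (hcard : Cardinal.mk X < Cardinal.lift.{u} domNum)
    (he : ∀ x, ∀ᶠ n in atTop, x ∈ star (range (e n)) (U n)) :
    ∃ g : ℕ → ℕ, ⋃ n, star (↑((Finset.range (g n)).image (e n))) (U n) = univ := by
  have hidx : ∀ x n, ∃ k, x ∈ star (range (e n)) (U n) → x ∈ star {e n k} (U n) := by
    intro x n
    by_cases hx : x ∈ star (range (e n)) (U n)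
    · obtain ⟨_, ⟨k, rfl⟩, hk⟩ := exists_mem_star_singleton_of_mem_star hx
      exact ⟨k, fun _ => hk⟩
    · exact ⟨0, fun h => absurd h hx⟩
  choose idx hidx using hidx
  obtain ⟨g, hg⟩ := exists_frequently_lt_of_mk_lt_domNum idx hcard
  refine ⟨g, eq_univ_of_forall fun x => mem_iUnion.mpr ?_⟩
  obtain ⟨n, hlt, hx⟩ := ((hg x).and_eventually (he x)).exists
  refine ⟨n, star_mono ?_ _ (hidx x n hx)⟩
  simpa using ⟨idx x n, hlt, rfl⟩

theorem stmt14 {X : Type u} [TopologicalSpace X]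
    (hext : CountableExtent X) (hcard : Cardinal.mk X < Cardinal.lift.{u} domNum)
    (h : SelSScdOGamma X) : SelStronglyStarMenger X := by
  classical
  intro U hU D hD
  cases isEmpty_or_nonempty X
  · exact ⟨fun _ => ∅, fun _ => by simp, eq_univ_of_forall isEmptyElim⟩
  obtain ⟨C, hC, hCstar⟩ := h U hU D hD
  have hseq : ∀ n, ∃ e : ℕ → X, C n ⊆ range e ∧ range e ⊆ D n := fun n =>
    (hext _ (hC n).2.1 (hC n).2.2).exists_seq_between (hC n).1 (hD n).nonempty
  choose e heC heD using hseq
  obtain ⟨g, hg⟩ := exists_bound_iUnion_star_image_eq_univ e hcard fun x =>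
    (hCstar x).mono fun n hx => star_mono (heC n) _ hx
  refine ⟨fun n => (Finset.range (g n)).image (e n), fun n => ?_, hg⟩
  rw [Finset.coe_image]
  exact (image_subset_range _ _).trans (heD n)
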